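/- For fixed g > 0 and h₀ > 0, the shock branch f_S(h;h₀) = (h - h₀)*sqrt((g/2)*(h + h₀)/(h*h₀)) satisfies f_S''(h) < 0 for all h > h₀, i.e., f_S is strictly concave on (h₀, ∞). -/

import Mathlib

/-!
For `h, h₀ > 0` the shock branch is `f(h) = (h - h₀) s(h)` with `s(h) = √(a + b/h)`, `a = g/(2h₀)`,
`b = g/2`. From `s' = -b/(2h²s)` alone one gets
`f'' = 2s' + (h - h₀)s'' = -b h₀/(h³ s) - b²(h - h₀)/(4h⁴ s³)`,
and both terms are negative when `h > h₀`.
-/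

open Real Set Filter Topology

noncomputable def swShock (g h₀ : ℝ) : ℝ → ℝ := fun h =>
  (h - h₀) * Real.sqrt ((g / 2) * (h + h₀) / (h * h₀))

section SubMulSqrtAddDiv

variable {a b h₀ x : ℝ}

theorem hasDerivAt_sqrt_add_div (hx : x ≠ 0) (hu : 0 < a + b / x) :
    HasDerivAt (fun h => √(a + b / h)) (-b / (2 * x ^ 2 * √(a + b / x))) x := by
  have hinner : HasDerivAt (fun h => a + b / h) (-b / x ^ 2) x := by
    simpa [div_eq_mul_inv, neg_div] using ((hasDerivAt_inv hx).const_mul b).const_add a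
  refine (hinner.sqrt hu.ne').congr_deriv ?_
  field_simp

theorem hasDerivAt_sub_mul_sqrt_add_div (hx : x ≠ 0) (hu : 0 < a + b / x) :
    HasDerivAt (fun h => (h - h₀) * √(a + b / h))
      (√(a + b / x) - b * (x - h₀) / (2 * x ^ 2 * √(a + b / x))) x := by
  refine (((hasDerivAt_id' x).sub_const h₀).mul (hasDerivAt_sqrt_add_div hx hu)).congr_deriv ?_
  ring

theorem hasDerivAt_sqrt_add_div_sub_div (hx : x ≠ 0) (hu : 0 < a + b / x) :
    HasDerivAt (fun h => √(a + b / h) - b * (h - h₀) / (2 * h ^ 2 * √(a + b / h)))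
      (-(b * h₀) / (x ^ 3 * √(a + b / x)) - b ^ 2 * (x - h₀) / (4 * x ^ 4 * √(a + b / x) ^ 3))
      x := by
  have hs := hasDerivAt_sqrt_add_div hx hu
  have hden : HasDerivAt (fun h => 2 * h ^ 2 * √(a + b / h))
      (2 * (2 * x) * √(a + b / x) + 2 * x ^ 2 * (-b / (2 * x ^ 2 * √(a + b / x)))) x := by
    refine (((hasDerivAt_pow 2 x).const_mul 2).mul hs).congr_deriv ?_
    norm_num
  have hnum : HasDerivAt (fun h => b * (h - h₀)) b x := by
    simpa using ((hasDerivAt_id' x).sub_const h₀).const_mul b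
  refine (hs.sub (hnum.div hden (by positivity))).congr_deriv ?_
  field_simp
  ring

end SubMulSqrtAddDiv

theorem swShock_eq_sub_mul_sqrt {g h₀ h : ℝ} (hh₀ : h₀ ≠ 0) (hh : h ≠ 0) :
    swShock g h₀ h = (h - h₀) * √(g / 2 / h₀ + g / 2 / h) := by
  unfold swShock
  congr 2
  field_simp

theorem hasDerivAt_swShock {g h₀ x : ℝ} (hg : 0 < g) (hh₀ : 0 < h₀) (hx : 0 < x) :
    HasDerivAt (swShock g h₀)
      (√(g / 2 / h₀ + g / 2 / x) - g / 2 * (x - h₀) / (2 * x ^ 2 * √(g / 2 / h₀ + g / 2 / x))) x := by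
  refine (hasDerivAt_sub_mul_sqrt_add_div hx.ne' (by positivity)).congr_of_eventuallyEq ?_
  filter_upwards [Ioi_mem_nhds hx] with y (hy : 0 < y)
  exact swShock_eq_sub_mul_sqrt hh₀.ne' hy.ne'

theorem deriv2_swShock_neg {g h₀ x : ℝ} (hg : 0 < g) (hh₀ : 0 < h₀) (hx : h₀ < x) :
    deriv (deriv (swShock g h₀)) x < 0 := by
  have hx0 : 0 < x := hh₀.trans hx
  have hderiv : deriv (swShock g h₀) =ᶠ[𝓝 x] fun h =>
      √(g / 2 / h₀ + g / 2 / h) - g / 2 * (h - h₀) / (2 * h ^ 2 * √(g / 2 / h₀ + g / 2 / h)) := by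
    filter_upwards [Ioi_mem_nhds hx0] with y (hy : 0 < y)
    exact (hasDerivAt_swShock hg hh₀ hy).deriv
  rw [hderiv.deriv_eq, (hasDerivAt_sqrt_add_div_sub_div hx0.ne' (by positivity)).deriv]
  have hxh₀ : 0 < x - h₀ := sub_pos.2 hx
  rw [neg_div, neg_sub_left, neg_lt_zero]
  positivity

theorem stmt_6 (g h₀ : ℝ) (hg : 0 < g) (hh₀ : 0 < h₀) :
    (∀ h : ℝ, h₀ < h → deriv (deriv (swShock g h₀)) h < 0) ∧
    StrictConcaveOn ℝ (Set.Ioi h₀) (swShock g h₀) := by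
  refine ⟨fun h hh => deriv2_swShock_neg hg hh₀ hh,
    strictConcaveOn_of_deriv2_neg' (convex_Ioi h₀) ?_ fun x hx => deriv2_swShock_neg hg hh₀ hx⟩
  intro x (hx : h₀ < x)
  exact (hasDerivAt_swShock hg hh₀ (hh₀.trans hx)).continuousAt.continuousWithinAt
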